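/- Suppose a path τ crosses I×J with ncost(τ_I) ≤ ε, and let I'×J' be a w'-box (w' ≤ μ(I) = w) that (1-δ)-covers τ. Then the adjusted diagonal extension I×J'' of I'×J' within I×J satisfies: I×J'' (1-(ε + δ·w'/w))-covers τ and ncost(I×J'') ≤ 3ε + 2δ·w'/w. -/

import Mathlib

open List

/-- Costs for the Levenshtein distance (removed from Mathlib; restored with its old meaning). -/
structure Levenshtein.Cost (α β δ : Type*) where
  delete : α → δ
  insert : β → δ
  substitute : α → β → δ

/-- The default cost structure: unit costs, zero-cost substitution of equal characters. -/
def Levenshtein.defaultCost {α : Type*} [DecidableEq α] : Levenshtein.Cost α α ℕ where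
  delete _ := 1
  insert _ := 1
  substitute a b := if a = b then 0 else 1

/-- Levenshtein distance (removed from Mathlib; restored by its defining recursion). -/
def levenshtein {α β δ : Type*} [AddZeroClass δ] [Min δ] (C : Levenshtein.Cost α β δ) :
    List α → List β → δ
  | [], [] => 0
  | x :: xs, [] => C.delete x + levenshtein C xs []
  | [], y :: ys => C.insert y + levenshtein C [] ys
  | x :: xs, y :: ys =>
    min (C.delete x + levenshtein C xs (y :: ys))
      (min (C.insert y + levenshtein C (x :: xs) ys) (C.substitute x y + levenshtein C xs ys))

/-- Edit distance between two lists (Levenshtein distance with unit costs). -/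
def edist {α : Type*} [DecidableEq α] (x y : List α) : ℕ :=
  levenshtein Levenshtein.defaultCost x y

/-- The substring of `x` indexed by the interval `I = {I.1, ..., I.2}` minus its minimum,
i.e. the characters `x_{I.1+1}, ..., x_{I.2}` (1-indexed). -/
def sub {α : Type*} (x : List α) (I : ℕ × ℕ) : List α :=
  (x.drop I.1).take (I.2 - I.1)

/-- A single step in a grid graph: horizontal, vertical, or diagonal. -/
def IsStep (p q : ℕ × ℕ) : Prop :=
  q = (p.1 + 1, p.2) ∨ q = (p.1, p.2 + 1) ∨ q = (p.1 + 1, p.2 + 1)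

/-- Cost of a step in the grid graph `G_{x,y}`: H- and V-steps cost 1, a D-step from `p`
costs 0 iff `x_{p.1+1} = y_{p.2+1}`. -/
def stepCost {α : Type*} [DecidableEq α] (x y : List α) (p q : ℕ × ℕ) : ℕ :=
  if q = (p.1 + 1, p.2 + 1) then (if x[p.1]? = y[p.2]? then 0 else 1) else 1

/-- Cost of a path (list of vertices) in `G_{x,y}`. -/
def pathCost {α : Type*} [DecidableEq α] (x y : List α) (τ : List (ℕ × ℕ)) : ℕ :=
  ((τ.zip τ.tail).map (fun e => stepCost x y e.1 e.2)).sum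

def IsPath (τ : List (ℕ × ℕ)) : Prop := τ.Chain' IsStep

def IsPathFrom (τ : List (ℕ × ℕ)) (a b : ℕ × ℕ) : Prop :=
  IsPath τ ∧ τ.head? = some a ∧ τ.getLast? = some b

/-- Minimum cost of a corner-to-corner path in the box `I × J` of `G_{x,y}`. -/
noncomputable def boxCost {α : Type*} [DecidableEq α] (x y : List α) (I J : ℕ × ℕ) : ℕ :=
  sInf {c | ∃ τ, IsPathFrom τ (I.1, J.1) (I.2, J.2) ∧ pathCost x y τ = c}

/-- A path crosses the box `I × J`: all its vertices lie in the box and its horizontal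
projection is exactly `I`. -/
def Crosses (τ : List (ℕ × ℕ)) (I J : ℕ × ℕ) : Prop :=
  IsPath τ ∧ τ ≠ [] ∧
  (∀ v ∈ τ, I.1 ≤ v.1 ∧ v.1 ≤ I.2 ∧ J.1 ≤ v.2 ∧ v.2 ≤ J.2) ∧
  τ.head?.map Prod.fst = some I.1 ∧ τ.getLast?.map Prod.fst = some I.2

/-- `σ` is the minimal subpath `τ_I` of `τ` whose horizontal projection is `I`. -/
def IsCrossSubpath (τ σ : List (ℕ × ℕ)) (I : ℕ × ℕ) : Prop :=
  σ <:+: τ ∧ σ ≠ [] ∧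
  (∀ v ∈ σ, I.1 ≤ v.1 ∧ v.1 ≤ I.2) ∧
  σ.head?.map Prod.fst = some I.1 ∧ σ.getLast?.map Prod.fst = some I.2 ∧
  (∀ v ∈ σ.tail, v.1 ≠ I.1) ∧ (∀ v ∈ σ.dropLast, v.1 ≠ I.2)

/-- The box `I × J` `(1-δ)`-covers a path whose relevant subpath is `σ`: the start (end)
vertex of `σ` is within `δ·μ(I)` vertical units of the lower-left (upper-right) corner. -/
def CoversAt (δ : ℚ) (I J : ℕ × ℕ) (σ : List (ℕ × ℕ)) : Prop :=
  ∃ s e : ℕ × ℕ, σ.head? = some s ∧ σ.getLast? = some e ∧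
    |(s.2 : ℚ) - (J.1 : ℚ)| ≤ δ * ((I.2 : ℚ) - (I.1 : ℚ)) ∧
    |(e.2 : ℚ) - (J.2 : ℚ)| ≤ δ * ((I.2 : ℚ) - (I.1 : ℚ))


/-!
Along a path of the grid graph the diagonal offset `row - column` changes by at most one per unit
of cost. Since `τ_{I'}` is a subpath of `τ_I`, the pieces of `τ_I` before and after it cost at
most `ncost(τ_I)·w` together, so both ends of `τ_I` lie within `ε·w + δ·w'` of the diagonal of
`I' × J'`. Clamping this diagonal into `I × J` only moves it towards one end of `τ_I`, which keeps
both ends within `ε·w + δ·w'` of the corners of `I × J''` and their total displacement within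
`2(ε·w + δ·w')`. Finally a corner-to-corner path of `I × J''` is obtained from `τ_I` by extending
or cutting it at both ends, at a price equal to the vertical displacements.
-/

lemma List.infix_of_append_eq_append {β : Type*} {U σ V U' σ' V' : List β}
    (h : U ++ σ ++ V = U' ++ σ' ++ V') (hstart : U.length ≤ U'.length)
    (hend : U'.length + σ'.length ≤ U.length + σ.length) : σ' <:+: σ := by
  obtain ⟨k, hk⟩ := Nat.exists_eq_add_of_le hstart
  have hσ'V' : σ' ++ V' = σ.drop k ++ V := by
    have := congrArg (drop U'.length) h
    rw [append_assoc, append_assoc, drop_left, hk, ← drop_drop, drop_left,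
      drop_append_of_le_length (by omega)] at this
    exact this.symm
  have hσ' : σ' = (σ.drop k).take σ'.length := by
    have := congrArg (take σ'.length) hσ'V'
    rwa [take_left, take_append_of_le_length (by simp; omega)] at this
  rw [hσ']
  exact (take_prefix _ _).isInfix.trans (drop_suffix _ _).isInfix

lemma List.countP_append_eq_length {β : Type*} {P W : List β} {q : β → Bool}
    (hP : ∀ a ∈ P, q a) (hW : ∀ a ∈ W, ¬q a) : (P ++ W).countP q = P.length := by
  rw [countP_append, countP_eq_length.mpr hP, countP_eq_zero.mpr hW, add_zero]

/-- Clamping `c` into `[L, U]` moves it towards `a` (if `c < L`) or towards `b` (if `U < c`). -/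
lemma abs_sub_clamp_le {R : Type*} [Field R] [LinearOrder R] [IsStrictOrderedRing R]
    {a b c L U K₁ K₂ K D : R} (haL : L ≤ a) (hbU : b ≤ U) (hac : |a - c| ≤ K₁ + D)
    (hbc : |b - c| ≤ K₂ + D) (hab : |b - a| ≤ K) (hK₂ : 0 ≤ K₂) (hK : K₁ + K₂ ≤ K)
    (hD : 0 ≤ D) :
    |a - max (min c U) L| ≤ K + D ∧ |b - max (min c U) L| ≤ K + D ∧
      |a - max (min c U) L| + |b - max (min c U) L| ≤ 2 * (K + D) := by
  generalize ht : max (min c U) L = t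
  have hclamp : t = c ∨ (t = U ∧ U ≤ c) ∨ (t = L ∧ (c ≤ L ∨ U ≤ L)) := by
    rcases le_total c U with hcU | hUc
    · rw [min_eq_left hcU] at ht
      rcases le_total c L with hcL | hLc
      · exact .inr (.inr ⟨by rw [← ht, max_eq_right hcL], .inl hcL⟩)
      · exact .inl (by rw [← ht, max_eq_left hLc])
    · rw [min_eq_right hUc] at ht
      rcases le_total U L with hUL | hLU
      · exact .inr (.inr ⟨by rw [← ht, max_eq_right hUL], .inr hUL⟩)
      · exact .inr (.inl ⟨by rw [← ht, max_eq_left hLU], hUc⟩)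
  rw [abs_le] at hac hbc hab
  rcases abs_cases (a - t) with ⟨ha, ha'⟩ | ⟨ha, ha'⟩ <;>
    rcases abs_cases (b - t) with ⟨hb, hb'⟩ | ⟨hb, hb'⟩ <;>
    rw [ha, hb] <;>
    rcases hclamp with rfl | ⟨rfl, hUc⟩ | ⟨rfl, hcL | hUL⟩ <;>
    refine ⟨?_, ?_, ?_⟩ <;> linarith

section Paths

variable {α : Type*} [DecidableEq α] (x y : List α)

lemma pathCost_cons_cons (p q : ℕ × ℕ) (t : List (ℕ × ℕ)) :
    pathCost x y (p :: q :: t) = stepCost x y p q + pathCost x y (q :: t) := rfl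

lemma pathCost_append_cons (u : List (ℕ × ℕ)) (b : ℕ × ℕ) (t : List (ℕ × ℕ)) :
    pathCost x y (u ++ b :: t) = pathCost x y (u ++ [b]) + pathCost x y (b :: t) := by
  induction u with
  | nil => exact (zero_add _).symm
  | cons p u ih =>
    cases u with
    | nil => rfl
    | cons p' u =>
      simp only [cons_append, pathCost_cons_cons] at ih ⊢
      omega

lemma pathCost_append_append (u σ v : List (ℕ × ℕ)) {s e : ℕ × ℕ} (hs : σ.head? = some s)
    (he : σ.getLast? = some e) :
    pathCost x y (u ++ σ ++ v) =
      pathCost x y (u ++ [s]) + pathCost x y σ + pathCost x y (e :: v) := by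
  obtain ⟨t, rfl⟩ := head?_eq_some_iff.mp hs
  obtain ⟨r, hr⟩ := getLast?_eq_some_iff.mp he
  have htv : s :: (t ++ v) = r ++ e :: v := by
    rw [← cons_append, hr]
    simp
  rw [append_assoc, cons_append, pathCost_append_cons, htv, pathCost_append_cons x y r e v, ← hr,
    add_assoc]

lemma stepCost_le_one (p q : ℕ × ℕ) : stepCost x y p q ≤ 1 := by
  unfold stepCost; split_ifs <;> simp

lemma stepCost_of_ne_diag {p q : ℕ × ℕ} (h : q ≠ (p.1 + 1, p.2 + 1)) : stepCost x y p q = 1 :=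
  if_neg h

lemma IsStep.le {p q : ℕ × ℕ} (h : IsStep p q) : p ≤ q := by
  rcases h with rfl | rfl | rfl <;> simp [Prod.le_def]

lemma IsPath.pairwise_le {τ : List (ℕ × ℕ)} (h : IsPath τ) : τ.Pairwise (· ≤ ·) :=
  (IsChain.imp (fun _ _ => IsStep.le) h).pairwise

lemma IsPathFrom.le {σ : List (ℕ × ℕ)} {p q : ℕ × ℕ} (h : IsPathFrom σ p q) : p ≤ q := by
  obtain ⟨hσ, hp, hq⟩ := h
  obtain ⟨t, rfl⟩ := head?_eq_some_iff.mp hp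
  rcases mem_cons.mp (mem_of_getLast? hq) with rfl | hqt
  · exact le_rfl
  · exact rel_of_pairwise_cons hσ.pairwise_le hqt

lemma IsStep.abs_sub_le_stepCost {p q : ℕ × ℕ} (h : IsStep p q) :
    |((q.2 : ℤ) - q.1) - ((p.2 : ℤ) - p.1)| ≤ stepCost x y p q := by
  rcases h with rfl | rfl | rfl
  · rw [stepCost_of_ne_diag x y (by simp)]; push_cast; norm_num
  · rw [stepCost_of_ne_diag x y (by simp)]; push_cast; norm_num
  · push_cast; simp

lemma IsPathFrom.abs_sub_le_pathCost {σ : List (ℕ × ℕ)} {p q : ℕ × ℕ} (h : IsPathFrom σ p q) :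
    |((q.2 : ℤ) - q.1) - ((p.2 : ℤ) - p.1)| ≤ pathCost x y σ := by
  obtain ⟨hσ, hp, hq⟩ := h
  induction σ generalizing p with
  | nil => simp at hp
  | cons a t ih =>
    obtain rfl : a = p := by simpa using hp
    cases t with
    | nil =>
      obtain rfl : a = q := by simpa using hq
      simp
    | cons b t =>
      replace hσ : IsChain IsStep (a :: b :: t) := hσ
      rw [isChain_cons_cons] at hσ
      have hbq := ih hσ.2 rfl (by rwa [getLast?_cons_cons] at hq)
      have hab := hσ.1.abs_sub_le_stepCost x y
      rw [pathCost_cons_cons]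
      push_cast
      calc _ ≤ |((q.2 : ℤ) - q.1) - ((b.2 : ℤ) - b.1)| + |((b.2 : ℤ) - b.1) - ((a.2 : ℤ) - a.1)| :=
            abs_sub_le _ _ _
        _ ≤ _ := by linarith

end Paths

section PathCostLE

variable {α : Type*} [DecidableEq α] (x y : List α)

def PathCostLE (p q : ℕ × ℕ) (c : ℕ) : Prop :=
  ∃ σ, IsPathFrom σ p q ∧ pathCost x y σ ≤ c

variable {x y}

lemma PathCostLE.mono {p q : ℕ × ℕ} {c c' : ℕ} (h : PathCostLE x y p q c) (hc : c ≤ c') :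
    PathCostLE x y p q c' :=
  let ⟨σ, hσ, hcost⟩ := h
  ⟨σ, hσ, hcost.trans hc⟩

lemma IsStep.pathCostLE {p q : ℕ × ℕ} (h : IsStep p q) : PathCostLE x y p q 1 :=
  ⟨[p, q], ⟨isChain_pair.mpr h, rfl, rfl⟩, stepCost_le_one x y p q⟩

lemma PathCostLE.trans {p q r : ℕ × ℕ} {c₁ c₂ : ℕ} (h₁ : PathCostLE x y p q c₁)
    (h₂ : PathCostLE x y q r c₂) : PathCostLE x y p r (c₁ + c₂) := by
  obtain ⟨σ₁, ⟨hσ₁, hp, hq⟩, hc₁⟩ := h₁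
  obtain ⟨σ₂, ⟨hσ₂, hq', hr⟩, hc₂⟩ := h₂
  obtain ⟨u, rfl⟩ := getLast?_eq_some_iff.mp hq
  obtain ⟨t, rfl⟩ := head?_eq_some_iff.mp hq'
  refine ⟨u ++ q :: t, ⟨?_, ?_, ?_⟩, ?_⟩
  · rw [← singleton_append, ← append_assoc]
    refine hσ₁.append hσ₂.tail fun a ha b hb => ?_
    rw [hq, Option.mem_some_iff] at ha
    exact ha ▸ hσ₂.rel_head? hb
  · cases u <;> simpa using hp
  · rwa [getLast?_append_of_ne_nil _ (cons_ne_nil _ _)]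
  · rw [pathCost_append_cons]
    omega

lemma pathCostLE_add_nsmul {d : ℕ × ℕ} (hd : ∀ p, IsStep p (p + d)) (p : ℕ × ℕ) (k : ℕ) :
    PathCostLE x y p (p + k • d) k := by
  induction k with
  | zero => exact ⟨[p], ⟨isChain_singleton p, by simp, by simp⟩, le_rfl⟩
  | succ k ih =>
    rw [succ_nsmul, ← add_assoc]
    exact ih.trans (hd (p + k • d)).pathCostLE

lemma pathCostLE_vertical (i r r' : ℕ) (h : r ≤ r') :
    PathCostLE x y (i, r) (i, r') (r' - r) := by
  simpa [Prod.ext_iff, h] using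
    pathCostLE_add_nsmul (x := x) (y := y) (d := (0, 1)) (fun _ => Or.inr (Or.inl rfl)) (i, r)
      (r' - r)

lemma pathCostLE_horizontal (i i' r : ℕ) (h : i ≤ i') :
    PathCostLE x y (i, r) (i', r) (i' - i) := by
  simpa [Prod.ext_iff, h] using
    pathCostLE_add_nsmul (x := x) (y := y) (d := (1, 0)) (fun _ => Or.inl rfl) (i, r) (i' - i)

lemma pathCostLE_diagonal (i r k : ℕ) : PathCostLE x y (i, r) (i + k, r + k) k := by
  simpa using
    pathCostLE_add_nsmul (x := x) (y := y) (d := (1, 1)) (fun _ => Or.inr (Or.inr rfl)) (i, r) k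

lemma PathCostLE.le {p q : ℕ × ℕ} {c : ℕ} (h : PathCostLE x y p q c) : p ≤ q :=
  let ⟨_, hσ, _⟩ := h
  hσ.le

lemma PathCostLE.abs_sub_le {p q : ℕ × ℕ} {c : ℕ} (h : PathCostLE x y p q c) :
    |((q.2 : ℤ) - q.1) - ((p.2 : ℤ) - p.1)| ≤ c :=
  let ⟨_, hσ, hc⟩ := h
  (hσ.abs_sub_le_pathCost x y).trans (by exact_mod_cast hc)

lemma boxCost_le_of_pathCostLE {I J : ℕ × ℕ} {c : ℕ}
    (h : PathCostLE x y (I.1, J.1) (I.2, J.2) c) :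
    boxCost x y I J ≤ c :=
  let ⟨σ, hσ, hc⟩ := h
  (Nat.sInf_le ⟨σ, hσ, rfl⟩ : boxCost x y I J ≤ pathCost x y σ).trans hc

lemma IsPathFrom.exists_eq_append_row {σ : List (ℕ × ℕ)} {p q : ℕ × ℕ} (h : IsPathFrom σ p q)
    {r : ℕ} (hpr : p.2 ≤ r) (hrq : r ≤ q.2) : ∃ u i w, σ = u ++ (i, r) :: w := by
  obtain ⟨hσ, hp, hq⟩ := h
  induction σ generalizing p with
  | nil => simp at hp
  | cons a t ih =>
    obtain rfl : a = p := by simpa using hp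
    rcases hpr.eq_or_lt with hr | hr
    · exact ⟨[], a.1, t, by rw [← hr]; rfl⟩
    cases t with
    | nil =>
      obtain rfl : a = q := by simpa using hq
      omega
    | cons b t =>
      replace hσ : IsChain IsStep (a :: b :: t) := hσ
      rw [isChain_cons_cons] at hσ
      have hb : b.2 ≤ a.2 + 1 := by rcases hσ.1 with rfl | rfl | rfl <;> simp
      obtain ⟨u, i, w, huw⟩ := ih (by omega) hσ.2 rfl (by rwa [getLast?_cons_cons] at hq)
      exact ⟨a :: u, i, w, by rw [huw]; rfl⟩

lemma PathCostLE.exists_split_row {p q : ℕ × ℕ} {c : ℕ} (h : PathCostLE x y p q c) {r : ℕ}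
    (hpr : p.2 ≤ r) (hrq : r ≤ q.2) :
    ∃ i c₁ c₂, PathCostLE x y p (i, r) c₁ ∧ PathCostLE x y (i, r) q c₂ ∧ c₁ + c₂ ≤ c := by
  obtain ⟨σ, hσpath, hc⟩ := h
  obtain ⟨u, i, w, rfl⟩ := hσpath.exists_eq_append_row hpr hrq
  obtain ⟨hσ, hp, hq⟩ := hσpath
  refine ⟨i, _, _, ⟨u ++ [(i, r)], ⟨hσ.infix ⟨[], w, by simp⟩, ?_, by simp⟩, le_rfl⟩,
    ⟨(i, r) :: w, ⟨hσ.infix ⟨u, [], by simp⟩, rfl, ?_⟩, le_rfl⟩, ?_⟩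
  · cases u <;> simp_all
  · rwa [getLast?_append_of_ne_nil _ (cons_ne_nil _ _)] at hq
  · rwa [← pathCost_append_cons]

/-- Cut the path where it reaches row `lo` and replace the part before by a horizontal segment,
which the offset bound pays for. -/
lemma PathCostLE.raise_start {i a lo : ℕ} {q : ℕ × ℕ} {c : ℕ} (h : PathCostLE x y (i, a) q c)
    (halo : a ≤ lo) (hloq : lo ≤ q.2) : PathCostLE x y (i, lo) q (c + (lo - a)) := by
  obtain ⟨i', c₁, c₂, h₁, h₂, hc⟩ := h.exists_split_row halo hloq
  have hslope := abs_le.mp h₁.abs_sub_le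
  have hii' : i ≤ i' := h₁.le.1
  refine ((pathCostLE_horizontal i i' lo hii').trans h₂).mono ?_
  simp only at hslope
  omega

lemma PathCostLE.lower_end {p : ℕ × ℕ} {i b hi : ℕ} {c : ℕ} (h : PathCostLE x y p (i, b) c)
    (hphi : p.2 ≤ hi) (hhib : hi ≤ b) : PathCostLE x y p (i, hi) (c + (b - hi)) := by
  obtain ⟨i', c₁, c₂, h₁, h₂, hc⟩ := h.exists_split_row hphi hhib
  have hslope := abs_le.mp h₂.abs_sub_le
  have hi'i : i' ≤ i := h₂.le.1
  refine (h₁.trans (pathCostLE_horizontal i' i hi hi'i)).mono ?_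
  simp only at hslope
  omega

/-- If the target box misses the rows of the path altogether, its diagonal is cheap enough. -/
lemma PathCostLE.boxCost_le {I : ℕ × ℕ} {a b c : ℕ} (h : PathCostLE x y (I.1, a) (I.2, b) c)
    (lo : ℕ) :
    (boxCost x y I (lo, lo + (I.2 - I.1)) : ℤ) ≤
      c + |(a : ℤ) - lo| + |(b : ℤ) - (lo + (I.2 - I.1) : ℕ)| := by
  set hi := lo + (I.2 - I.1) with hhi
  have hI : I.1 ≤ I.2 := h.le.1
  have hab : a ≤ b := h.le.2
  suffices ∃ c', PathCostLE x y (I.1, lo) (I.2, hi) c' ∧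
      (c' : ℤ) ≤ c + |(a : ℤ) - lo| + |(b : ℤ) - hi| by
    obtain ⟨c', hc', hle⟩ := this
    exact (Int.ofNat_le.mpr (boxCost_le_of_pathCostLE hc')).trans hle
  have ha := le_abs_self ((a : ℤ) - lo)
  have ha' := neg_abs_le ((a : ℤ) - lo)
  have hb := le_abs_self ((b : ℤ) - hi)
  have hb' := neg_abs_le ((b : ℤ) - hi)
  have hdiag : PathCostLE x y (I.1, lo) (I.2, hi) (I.2 - I.1) := by
    simpa [hI] using pathCostLE_diagonal (x := x) (y := y) I.1 lo (I.2 - I.1)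
  by_cases hfar : b < lo ∨ hi < a
  · exact ⟨_, hdiag, by omega⟩
  simp only [not_or, not_lt] at hfar
  obtain ⟨c₁, h₁, hc₁⟩ : ∃ c₁, PathCostLE x y (I.1, lo) (I.2, b) c₁ ∧
      (c₁ : ℤ) ≤ c + |(a : ℤ) - lo| := by
    rcases le_total a lo with halo | hloa
    · exact ⟨_, h.raise_start halo hfar.1, by omega⟩
    · exact ⟨_, (pathCostLE_vertical I.1 lo a hloa).trans h, by omega⟩
  rcases le_total b hi with hbhi | hhib
  · exact ⟨_, h₁.trans (pathCostLE_vertical I.2 b hi hbhi), by omega⟩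
  · exact ⟨_, h₁.lower_end (by omega) hhib, by omega⟩

lemma IsPath.pathCostLE_of_infix {σ σ' : List (ℕ × ℕ)} (hσ : IsPath σ) (h : σ' <:+: σ)
    {s e s' e' : ℕ × ℕ} (hs : σ.head? = some s) (he : σ.getLast? = some e)
    (hs' : σ'.head? = some s') (he' : σ'.getLast? = some e') :
    ∃ c₁ c₂, PathCostLE x y s s' c₁ ∧ PathCostLE x y e' e c₂ ∧ c₁ + c₂ ≤ pathCost x y σ := by
  obtain ⟨A, B, rfl⟩ := h
  obtain ⟨t, rfl⟩ := head?_eq_some_iff.mp hs'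
  obtain ⟨r, hr⟩ := getLast?_eq_some_iff.mp he'
  have hsplit : A ++ s' :: t ++ B = (A ++ r) ++ e' :: B := by
    rw [hr]
    simp
  refine ⟨_, _, ⟨A ++ [s'], ⟨hσ.infix ⟨[], t ++ B, by simp⟩, ?_, by simp⟩, le_rfl⟩,
    ⟨e' :: B, ⟨hσ.infix ⟨_, [], by rw [hsplit, append_nil]⟩, rfl, ?_⟩, le_rfl⟩, ?_⟩
  · cases A <;> simpa using hs
  · rwa [hsplit, getLast?_append_of_ne_nil _ (cons_ne_nil _ _)] at he
  · rw [pathCost_append_append x y A _ B rfl he']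
    omega

lemma PathCostLE.adjustedExtension_bounds {I I' J J' : ℕ × ℕ} {a b a' b' c₁ c₂ K lo : ℕ}
    {D : ℚ}
    (hσ : PathCostLE x y (I.1, a) (I.2, b) K) (h₁ : PathCostLE x y (I.1, a) (I'.1, a') c₁)
    (h₂ : PathCostLE x y (I'.2, b') (I.2, b) c₂) (hc : c₁ + c₂ ≤ K)
    (haJ : J.1 ≤ a) (hbJ : b ≤ J.2) (hJ' : J'.2 + I'.1 = J'.1 + I'.2)
    (ha' : |(a' : ℚ) - J'.1| ≤ D) (hb' : |(b' : ℚ) - J'.2| ≤ D)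
    (hlo : (lo : ℤ) = max (min ((J'.1 : ℤ) + I.1 - I'.1) ((J.2 : ℤ) - (I.2 - I.1 : ℕ))) J.1) :
    |(a : ℚ) - lo| ≤ K + D ∧ |(b : ℚ) - (lo + (I.2 - I.1) : ℕ)| ≤ K + D ∧
      (boxCost x y I (lo, lo + (I.2 - I.1)) : ℚ) ≤ 3 * K + 2 * D := by
  have hI : I.1 ≤ I.2 := hσ.le.1
  have hJ'Q : (J'.2 : ℚ) + I'.1 = J'.1 + I'.2 := by exact_mod_cast hJ'
  have hloQ : (lo : ℚ) =
      max (min ((J'.1 : ℚ) - I'.1) ((J.2 : ℚ) - I.2)) ((J.1 : ℚ) - I.1) + I.1 := by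
    have := congrArg (Int.cast (R := ℚ)) hlo
    push_cast [Nat.cast_sub hI] at this
    rw [this, ← max_add_add_right, ← min_add_add_right]
    ring_nf
  have hslope₁ : |((a' : ℚ) - I'.1) - ((a : ℚ) - I.1)| ≤ c₁ := by exact_mod_cast h₁.abs_sub_le
  have hslope₂ : |((b : ℚ) - I.2) - ((b' : ℚ) - I'.2)| ≤ c₂ := by exact_mod_cast h₂.abs_sub_le
  have hslope : |((b : ℚ) - I.2) - ((a : ℚ) - I.1)| ≤ K := by exact_mod_cast hσ.abs_sub_le
  have hD : 0 ≤ D := (abs_nonneg _).trans ha'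
  rw [abs_le] at hslope₁ hslope₂ ha' hb'
  obtain ⟨hs, he, hsum⟩ := abs_sub_clamp_le (a := (a : ℚ) - I.1) (b := (b : ℚ) - I.2)
    (c := (J'.1 : ℚ) - I'.1) (L := (J.1 : ℚ) - I.1) (U := (J.2 : ℚ) - I.2) (K₁ := c₁) (K₂ := c₂)
    (sub_le_sub_right (by exact_mod_cast haJ) _) (sub_le_sub_right (by exact_mod_cast hbJ) _)
    (abs_le.mpr ⟨by linarith, by linarith⟩) (abs_le.mpr ⟨by linarith, by linarith⟩) hslope
    (Nat.cast_nonneg c₂) (by exact_mod_cast hc) hD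
  have hlo' : ((lo + (I.2 - I.1) : ℕ) : ℚ) = lo + I.2 - I.1 := by
    push_cast [Nat.cast_sub hI]; ring
  have hbox : (boxCost x y I (lo, lo + (I.2 - I.1)) : ℚ) ≤
      K + |(a : ℚ) - lo| + |(b : ℚ) - (lo + (I.2 - I.1) : ℕ)| := by
    exact_mod_cast hσ.boxCost_le lo
  rw [eq_sub_of_add_eq hloQ.symm] at hs he hsum
  rw [sub_sub_sub_cancel_right] at hs hsum
  rw [hlo', show (b : ℚ) - (lo + I.2 - I.1) = b - I.2 - (lo - I.1) by ring] at hbox ⊢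
  exact ⟨hs, he, by linarith⟩

end PathCostLE

section CrossSubpath

variable {τ σ σ' U V : List (ℕ × ℕ)} {I I' : ℕ × ℕ}

lemma IsCrossSubpath.exists_head_getLast (hσ : IsCrossSubpath τ σ I) :
    ∃ a b, σ.head? = some (I.1, a) ∧ σ.getLast? = some (I.2, b) := by
  obtain ⟨-, -, -, hhead, hlast, -, -⟩ := hσ
  obtain ⟨s, hs, hs1⟩ : ∃ s, σ.head? = some s ∧ s.1 = I.1 := by simpa using hhead
  obtain ⟨e, he, he1⟩ : ∃ e, σ.getLast? = some e ∧ e.1 = I.2 := by simpa using hlast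
  exact ⟨s.2, e.2, by rw [hs, ← hs1], by rw [he, ← he1]⟩

/-- `τ_I` starts at the last vertex of `τ` in a column `≤ I.1` and ends at the first one in a
column `≥ I.2`; both positions are monotone in `I`. -/
lemma IsCrossSubpath.countP_fst_le (hτ : IsPath τ) (hσ : IsCrossSubpath τ σ I) (hI : I.1 < I.2)
    (h : U ++ σ ++ V = τ) : τ.countP (fun v => v.1 ≤ I.1) = U.length + 1 := by
  obtain ⟨a, b, ha, hb⟩ := hσ.exists_head_getLast
  obtain ⟨t, rfl⟩ := head?_eq_some_iff.mp ha
  have hpw := hτ.pairwise_le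
  rw [← h, pairwise_append, pairwise_append] at hpw
  rw [← h, show U ++ (I.1, a) :: t ++ V = (U ++ [(I.1, a)]) ++ (t ++ V) by simp,
    countP_append_eq_length, length_append, length_singleton]
  · intro u hu
    simp only [decide_eq_true_eq]
    rcases mem_append.mp hu with hu | hu
    · exact (hpw.1.2.2 u hu _ (mem_cons_self ..)).1
    · rw [mem_singleton.mp hu]
  · intro v hv
    simp only [decide_eq_true_eq, not_le]
    rcases mem_append.mp hv with hv | hv
    · exact lt_of_le_of_ne (rel_of_pairwise_cons hpw.1.2.1 hv).1 (hσ.2.2.2.2.2.1 v hv).symm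
    · have := (hpw.2.2 _ (mem_append_right U (mem_of_getLast? hb)) v hv).1
      simp only at this
      omega

lemma IsCrossSubpath.countP_fst_lt (hτ : IsPath τ) (hσ : IsCrossSubpath τ σ I) (hI : I.1 < I.2)
    (h : U ++ σ ++ V = τ) : τ.countP (fun v => v.1 < I.2) + 1 = U.length + σ.length := by
  obtain ⟨a, b, ha, hb⟩ := hσ.exists_head_getLast
  obtain ⟨r, hr⟩ := getLast?_eq_some_iff.mp hb
  have hpw := hτ.pairwise_le
  rw [← h, pairwise_append, pairwise_append] at hpw
  rw [← h, hr, show U ++ (r ++ [(I.2, b)]) ++ V = (U ++ r) ++ ((I.2, b) :: V) by simp,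
    countP_append_eq_length, length_append, length_append, length_singleton, add_assoc]
  · intro u hu
    simp only [decide_eq_true_eq]
    rcases mem_append.mp hu with hu | hu
    · have := (hpw.1.2.2 u hu _ (mem_of_mem_head? ha)).1
      simp only at this
      omega
    · have hpwσ := hpw.1.2.1
      rw [hr, pairwise_append] at hpwσ
      have hne : u.1 ≠ I.2 := hσ.2.2.2.2.2.2 u (by rw [hr, dropLast_concat]; exact hu)
      exact lt_of_le_of_ne (hpwσ.2.2 u hu _ (mem_singleton_self _)).1 hne
  · intro v hv
    simp only [decide_eq_true_eq, not_lt]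
    rcases mem_cons.mp hv with rfl | hv
    · exact le_rfl
    · exact (hpw.2.2 _ (mem_append_right U (mem_of_getLast? hb)) v hv).1

lemma IsCrossSubpath.infix_of_le (hτ : IsPath τ) (hσ : IsCrossSubpath τ σ I)
    (hσ' : IsCrossSubpath τ σ' I') (hI' : I'.1 < I'.2) (hII' : I.1 ≤ I'.1 ∧ I'.2 ≤ I.2) :
    σ' <:+: σ := by
  obtain ⟨U, V, hUV⟩ := hσ.1
  obtain ⟨U', V', hUV'⟩ := hσ'.1
  have hI : I.1 < I.2 := by omega
  refine infix_of_append_eq_append (hUV.trans hUV'.symm) ?_ ?_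
  · have := hσ.countP_fst_le hτ hI hUV
    have := hσ'.countP_fst_le hτ hI' hUV'
    have : τ.countP (fun v => v.1 ≤ I.1) ≤ τ.countP (fun v => v.1 ≤ I'.1) :=
      countP_mono_left fun v _ => by simp only [decide_eq_true_eq]; omega
    omega
  · have := hσ.countP_fst_lt hτ hI hUV
    have := hσ'.countP_fst_lt hτ hI' hUV'
    have : τ.countP (fun v => v.1 < I'.2) ≤ τ.countP (fun v => v.1 < I.2) :=
      countP_mono_left fun v _ => by simp only [decide_eq_true_eq]; omega
    omega

end CrossSubpath

lemma CoversAt.abs_sub_le {δ : ℚ} {I J s e : ℕ × ℕ} {σ : List (ℕ × ℕ)} (h : CoversAt δ I J σ)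
    (hs : σ.head? = some s) (he : σ.getLast? = some e) :
    |(s.2 : ℚ) - J.1| ≤ δ * (I.2 - I.1) ∧ |(e.2 : ℚ) - J.2| ≤ δ * (I.2 - I.1) := by
  obtain ⟨s', e', hs', he', h₁, h₂⟩ := h
  obtain rfl := Option.some_inj.mp (hs.symm.trans hs')
  obtain rfl := Option.some_inj.mp (he.symm.trans he')
  exact ⟨h₁, h₂⟩

theorem stmt9_general {α : Type*} [DecidableEq α] (x y : List α) (τ σI σ' : List (ℕ × ℕ))
    (I J I' J' : ℕ × ℕ) (ε δ : ℚ)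
    (hcross : Crosses τ I J)
    (hσI : IsCrossSubpath τ σI I)
    (hεcost : (pathCost x y σI : ℚ) / ((I.2 : ℚ) - (I.1 : ℚ)) ≤ ε)
    (hIw : I.1 < I.2) (hI' : I'.1 < I'.2)
    (hsub : I.1 ≤ I'.1 ∧ I'.2 ≤ I.2)
    (hJ'sq : J'.2 - J'.1 = I'.2 - I'.1)
    (hσ' : IsCrossSubpath τ σ' I')
    (hcov : CoversAt δ I' J' σ') :
    -- the adjusted diagonal extension I × J'' of I' × J' within I × J:
    let w : ℚ := (I.2 : ℚ) - (I.1 : ℚ)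
    let w' : ℚ := (I'.2 : ℚ) - (I'.1 : ℚ)
    let jlo : ℕ := (max (min ((J'.1 : ℤ) + (I.1 : ℤ) - (I'.1 : ℤ))
      ((J.2 : ℤ) - ((I.2 - I.1 : ℕ) : ℤ))) (J.1 : ℤ)).toNat
    CoversAt (ε + δ * w' / w) I (jlo, jlo + (I.2 - I.1)) σI ∧
    (boxCost x y I (jlo, jlo + (I.2 - I.1)) : ℚ) / w ≤ 3 * ε + 2 * δ * w' / w := by
  intro w w' jlo
  obtain ⟨hτ, -, hτbox, -, -⟩ := hcross
  obtain ⟨a, b, ha, hb⟩ := hσI.exists_head_getLast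
  obtain ⟨a', b', ha', hb'⟩ := hσ'.exists_head_getLast
  have hσpath : IsPathFrom σI (I.1, a) (I.2, b) := ⟨hτ.infix hσI.1, ha, hb⟩
  obtain ⟨c₁, c₂, h₁, h₂, hc⟩ := hσpath.1.pathCostLE_of_infix (x := x) (y := y)
    (hσI.infix_of_le hτ hσ' hI' hsub) ha hb ha' hb'
  obtain ⟨hcov₁, hcov₂⟩ := hcov.abs_sub_le ha' hb'
  obtain ⟨hs, he, hbox⟩ := (show PathCostLE x y _ _ _ from ⟨σI, hσpath, le_rfl⟩)
    |>.adjustedExtension_bounds h₁ h₂ hc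
      (hτbox _ (hσI.1.subset (mem_of_mem_head? ha))).2.2.1
      (hτbox _ (hσI.1.subset (mem_of_getLast? hb))).2.2.2 (by omega) hcov₁ hcov₂
      (Int.toNat_of_nonneg (le_max_of_le_right (Int.natCast_nonneg _)))
  have hw : (0 : ℚ) < w := sub_pos.mpr (by exact_mod_cast hIw)
  have hK : (pathCost x y σI : ℚ) ≤ ε * w := (div_le_iff₀ hw).mp hεcost
  have hcover : (ε + δ * w' / w) * w = ε * w + δ * w' := by field_simp
  have hcost : (3 * ε + 2 * δ * w' / w) * w = 3 * (ε * w) + 2 * (δ * w') := by field_simp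
  refine ⟨⟨_, _, ha, hb, ?_, ?_⟩, ?_⟩
  · rw [hcover]; linarith
  · rw [hcover]; linarith
  · rw [div_le_iff₀ hw, hcost]; linarith

/-- the adjusted diagonal extension I×J'' of a w'-box I'×J' that
(1-δ)-covers τ satisfies: I×J'' (1-(ε+δw'/w))-covers τ and
ncost(I×J'') ≤ 3ε + 2δw'/w. -/
theorem stmt9 {α : Type*} [DecidableEq α] (x y : List α) (τ σI σ' : List (ℕ × ℕ))
    (I J I' J' : ℕ × ℕ) (ε δ : ℚ)
    (hcross : Crosses τ I J)
    (hσI : IsCrossSubpath τ σI I)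
    (hεcost : (pathCost x y σI : ℚ) / ((I.2 : ℚ) - (I.1 : ℚ)) ≤ ε)
    (hIw : I.1 < I.2) (hI' : I'.1 < I'.2)
    (hsub : I.1 ≤ I'.1 ∧ I'.2 ≤ I.2)
    (hJ'sq : J'.2 - J'.1 = I'.2 - I'.1) (hJ'sub : J.1 ≤ J'.1 ∧ J'.2 ≤ J.2)
    (hJw : I.2 - I.1 ≤ J.2 - J.1)
    (hσ' : IsCrossSubpath τ σ' I')
    (hcov : CoversAt δ I' J' σ') :
    -- the adjusted diagonal extension I × J'' of I' × J' within I × J: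
    let w : ℚ := (I.2 : ℚ) - (I.1 : ℚ)
    let w' : ℚ := (I'.2 : ℚ) - (I'.1 : ℚ)
    let jlo : ℕ := (max (min ((J'.1 : ℤ) + (I.1 : ℤ) - (I'.1 : ℤ))
      ((J.2 : ℤ) - ((I.2 - I.1 : ℕ) : ℤ))) (J.1 : ℤ)).toNat
    CoversAt (ε + δ * w' / w) I (jlo, jlo + (I.2 - I.1)) σI ∧
    (boxCost x y I (jlo, jlo + (I.2 - I.1)) : ℚ) / w ≤ 3 * ε + 2 * δ * w' / w :=
  stmt9_general x y τ σI σ' I J I' J' ε δ hcross hσI hεcost hIw hI' hsub hJ'sq hσ' hcov
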